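/- Let n ≥ 1 and let p be a map assigning to each x ∈ {0,1}^n a probability mass function p(· | x) on {0,1}^n. Then p is a 1-ary unbiased distribution family if and only if there exists a probability mass function r on {0, 1, …, n} such that for all x, y ∈ {0,1}^n, p(y | x) = r(H(x, y)) / C(n, H(x, y)), where H denotes the Hamming distance and C(n, d) the binomial coefficient; equivalently, sampling from p(· | x) amounts to drawing d ∼ r and then flipping the entries of a uniformly random set of d distinct coordinates of x. -/

import Mathlib

open scoped ENNReal

/-- Bit strings of length `n`. -/
abbrev Point (n : ℕ) := Fin n → Bool

/-- Pointwise XOR (the `⊕`-shift) of bit strings. -/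
def pxor {n : ℕ} (x z : Point n) : Point n := fun i => xor (x i) (z i)

/-- The Hamming distance of two bit strings. -/
def hamming {n : ℕ} (x y : Point n) : ℕ :=
  (Finset.univ.filter fun i => x i ≠ y i).card

/-!
⊕-invariance gives `p(y | x) = p(y ⊕ x | 0)`, and permutation invariance makes `p(· | 0)`
constant on each Hamming sphere around `0`, because two strings with the same number of
ones differ by a permutation of the coordinates. Hence `r` is the pushforward of `p(· | 0)`
under the distance to `0`, and the `C(n, d)` points of the sphere of radius `d` share its
mass `r d` equally.
-/

open Finset

theorem Equiv.Perm.exists_comp_eq_of_card_filter_eq {α : Type*} [Fintype α] [DecidableEq α]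
    {w v : α → Bool} (h : #{i | w i = true} = #{i | v i = true}) :
    ∃ σ : Equiv.Perm α, w ∘ σ = v := by
  have hcard : Fintype.card {i // v i = true} = Fintype.card {i // w i = true} := by
    simpa only [Fintype.card_subtype] using h.symm
  let e := Fintype.equivOfCardEq hcard
  refine ⟨e.extendSubtype, funext fun i => ?_⟩
  by_cases hi : v i = true
  · simpa [hi] using e.extendSubtype_mem i hi
  · simpa [hi] using e.extendSubtype_not_mem i hi

namespace Point

variable {n : ℕ}

def zero (n : ℕ) : Point n := fun _ => false

theorem pxor_self (x : Point n) : pxor x x = zero n := by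
  funext i
  simp [pxor, zero]

theorem hamming_le (x y : Point n) : hamming x y ≤ n :=
  (card_filter_le _ _).trans_eq (by simp)

theorem hamming_pxor_pxor (x y z : Point n) :
    hamming (pxor x z) (pxor y z) = hamming x y := by
  unfold hamming pxor
  congr 1
  refine filter_congr fun i _ => ?_
  cases x i <;> cases y i <;> cases z i <;> simp

theorem hamming_comp_perm (x y : Point n) (σ : Equiv.Perm (Fin n)) :
    hamming (x ∘ σ) (y ∘ σ) = hamming x y :=
  card_equiv σ fun i => by simp

theorem hamming_zero_left (y : Point n) : hamming (zero n) y = #{i | y i = true} := by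
  unfold hamming zero
  congr 1
  refine filter_congr fun i _ => ?_
  cases y i <;> simp

theorem card_hamming_eq (x : Point n) (d : ℕ) : #{y | hamming x y = d} = n.choose d := by
  have hchoose : n.choose d = #(powersetCard d (univ : Finset (Fin n))) := by simp
  rw [hchoose]
  refine card_nbij' (fun y => ({i | x i ≠ y i} : Finset (Fin n)))
    (fun s i => xor (x i) (decide (i ∈ s))) (fun y hy => by simpa [hamming] using hy)
    (fun s hs => ?_) (fun y _ => funext fun i => ?_) (fun s _ => ext fun i => ?_)
  · simp only [mem_coe, mem_powersetCard, mem_filter, mem_univ, true_and] at hs ⊢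
    rw [← hs.2, hamming]
    congr 1
    ext i
    by_cases h : i ∈ s <;> simp [h]
  · by_cases h : x i = y i <;> simp [h, Bool.eq_not_iff]
  · by_cases h : i ∈ s <;> simp [h]

theorem hamming_zero_pxor (x y : Point n) : hamming (zero n) (pxor y x) = hamming x y := by
  rw [← pxor_self x, hamming_pxor_pxor]

def hammingFin (x y : Point n) : Fin (n + 1) := ⟨hamming x y, Nat.lt_succ_of_le (hamming_le x y)⟩

theorem hammingFin_pxor_pxor (x y z : Point n) :
    hammingFin (pxor x z) (pxor y z) = hammingFin x y :=
  Fin.ext (hamming_pxor_pxor x y z)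

theorem hammingFin_comp_perm (x y : Point n) (σ : Equiv.Perm (Fin n)) :
    hammingFin (x ∘ σ) (y ∘ σ) = hammingFin x y :=
  Fin.ext (hamming_comp_perm x y σ)

theorem hammingFin_zero_pxor (x y : Point n) : hammingFin (zero n) (pxor y x) = hammingFin x y :=
  Fin.ext (hamming_zero_pxor x y)

theorem map_hammingFin_apply (q : PMF (Point n)) (x w : Point n)
    (hq : ∀ u v, hamming x u = hamming x v → q u = q v) :
    q.map (hammingFin x) (hammingFin x w) = n.choose (hamming x w) * q w := by
  have hsphere : ∀ v ∈ ({v | hamming x v = hamming x w} : Finset (Point n)), q v = q w :=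
    fun v hv => hq v w (mem_filter.mp hv).2
  calc q.map (hammingFin x) (hammingFin x w)
      = ∑ v ∈ {v | hamming x v = hamming x w}, q v := by
        rw [PMF.map_apply, tsum_fintype, sum_filter]
        refine sum_congr rfl fun v _ => ?_
        simp [hammingFin, Fin.ext_iff, eq_comm]
    _ = n.choose (hamming x w) * q w := by
        rw [sum_congr rfl hsphere, sum_const, card_hamming_eq, nsmul_eq_mul]

end Point

open Point

/-- Characterization of unary unbiased variation operators: `p` is a 1-ary
unbiased distribution family iff there is a distribution `r` on `{0,…,n}` such
that sampling from `p(·|x)` amounts to drawing `d ∼ r` and flipping a uniformly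
random set of `d` distinct coordinates of `x`; i.e.
`p(y|x) = r(H(x,y))/C(n,H(x,y))`. -/
theorem stmt15 (n : ℕ) (p : Point n → PMF (Point n)) :
    ((∀ (x y z : Point n), p x y = p (pxor x z) (pxor y z)) ∧
     (∀ (x y : Point n) (σ : Equiv.Perm (Fin n)), p x y = p (x ∘ σ) (y ∘ σ))) ↔
    ∃ r : PMF (Fin (n + 1)), ∀ x y : Point n,
      p x y = r ⟨hamming x y,
          Nat.lt_succ_of_le (le_trans (Finset.card_filter_le _ _) (by simp))⟩ /
        (Nat.choose n (hamming x y) : ℝ≥0∞) := by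
  refine ⟨fun ⟨hxor, hperm⟩ => ?_, fun ⟨r, hr⟩ => ⟨fun x y z => ?_, fun x y σ => ?_⟩⟩
  · have hshift : ∀ x y, p x y = p (zero n) (pxor y x) := fun x y => by
      simpa only [pxor_self] using hxor x y x
    have hsphere :
        ∀ u v, hamming (zero n) u = hamming (zero n) v → p (zero n) u = p (zero n) v := by
      intro u v huv
      rw [hamming_zero_left, hamming_zero_left] at huv
      obtain ⟨σ, rfl⟩ := Equiv.Perm.exists_comp_eq_of_card_filter_eq huv
      exact hperm (zero n) u σ
    refine ⟨(p (zero n)).map (hammingFin (zero n)), fun x y => ?_⟩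
    have hchoose : (n.choose (hamming x y) : ℝ≥0∞) ≠ 0 := by
      exact_mod_cast (Nat.choose_pos (hamming_le x y)).ne'
    rw [ENNReal.eq_div_iff hchoose (ENNReal.natCast_ne_top _), hshift x y]
    change _ = (p (zero n)).map (hammingFin (zero n)) (hammingFin x y)
    rw [← hammingFin_zero_pxor, map_hammingFin_apply _ _ _ hsphere, hamming_zero_pxor]
  · rw [hr, hr]
    change r (hammingFin x y) / _ = r (hammingFin (pxor x z) (pxor y z)) / _
    rw [hammingFin_pxor_pxor, hamming_pxor_pxor]
  · rw [hr, hr]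
    change r (hammingFin x y) / _ = r (hammingFin (x ∘ σ) (y ∘ σ)) / _
    rw [hammingFin_comp_perm, hamming_comp_perm]
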